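/- arXiv:1212.4574 — 3 statements merged into one kernel-verified Lean document; each statement's English description precedes it below -/
import Mathlib

section
/- If g : [a,b] → ℝ has negligible variation on E ⊆ [a,b], then the image g(E) has Lebesgue measure zero. -/
/-!
Fix `ε > 0` and a gauge `δ` witnessing negligible variation with bound `ε`. The sets
`E_r = {x ∈ E | r < δ x}` increase to `E` as `r ↓ 0`, so it suffices to bound `λ(g(E_r))` by `ε`.
Cut `[a, b]` into finitely many cells of length `< r`. Two points `x, y` of `E_r` in one cell span
an interval inside the `δ`-ball around `x`, so choosing one such pair per cell, each tagged at its
point `x ∈ E`, and filling the gaps by Cousin's lemma gives a `δ`-fine partition of `[a, b]`.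
Hence the oscillations of `g` on the pieces `E_r ∩ cell` sum to at most `ε`, and since
`λ(S) ≤ diam S` on the line, `λ(g(E_r)) ≤ ε`.
-/

open Set MeasureTheory Filter
open scoped Classical

/-- A tagged partition of `[a, b]`: division points `t 0 = a ≤ t 1 ≤ ⋯ ≤ t n = b`
together with tags `tag i ∈ [t i, t (i+1)]`. -/
structure TaggedPartition (a b : ℝ) where
  n : ℕ
  t : ℕ → ℝ
  tag : ℕ → ℝ
  t_first : t 0 = a
  t_last : t n = b
  t_mono : ∀ i < n, t i ≤ t (i + 1)
  tag_mem : ∀ i < n, tag i ∈ Set.Icc (t i) (t (i + 1))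

/-- A tagged partition is subordinate to a gauge `δ` if each interval is contained in the
open ball of radius `δ` around its tag. -/
def TaggedPartition.Subordinate {a b : ℝ} (P : TaggedPartition a b) (δ : ℝ → ℝ) : Prop :=
  ∀ i < P.n,
    Set.Icc (P.t i) (P.t (i + 1)) ⊆ Set.Ioo (P.tag i - δ (P.tag i)) (P.tag i + δ (P.tag i))

/-- A gauge on `[a, b]` is positive on `[a, b]`. -/
def IsGauge (a b : ℝ) (δ : ℝ → ℝ) : Prop := ∀ x ∈ Set.Icc a b, 0 < δ x

/-- `f` has negligible variation on `E ⊆ [a, b]`. -/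

def NegVar (a b : ℝ) (f : ℝ → ℝ) (E : Set ℝ) : Prop :=
  ∀ ε > 0, ∃ δ : ℝ → ℝ, IsGauge a b δ ∧ ∀ P : TaggedPartition a b, P.Subordinate δ →
    (∑ i ∈ Finset.range P.n,
      if P.tag i ∈ E then |f (P.t (i + 1)) - f (P.t i)| else 0) < ε

/-- `f` has negligible conditional variation on `E ⊆ [a, b]`. -/

def NegCondVar (a b : ℝ) (f : ℝ → ℝ) (E : Set ℝ) : Prop :=
  ∀ ε > 0, ∃ δ : ℝ → ℝ, IsGauge a b δ ∧ ∀ P : TaggedPartition a b, P.Subordinate δ →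
    |∑ i ∈ Finset.range P.n,
      if P.tag i ∈ E then f (P.t (i + 1)) - f (P.t i) else 0| < ε

/-- `I` is the Henstock–Kurzweil integral of `h` on `[a, b]` (with `a ≤ b`). -/
def HKIntegralTo (a b : ℝ) (h : ℝ → ℝ) (I : ℝ) : Prop :=
  ∀ ε > 0, ∃ δ : ℝ → ℝ, IsGauge a b δ ∧ ∀ P : TaggedPartition a b, P.Subordinate δ →
    |(∑ i ∈ Finset.range P.n, h (P.tag i) * (P.t (i + 1) - P.t i)) - I| < ε

/-- Oriented HK integral: `(HK)∫_a^b h = I`, with the convention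
`(HK)∫_b^a h = -(HK)∫_a^b h`. -/
def HKIntegral (a b : ℝ) (h : ℝ → ℝ) (I : ℝ) : Prop :=
  if a ≤ b then HKIntegralTo a b h I else HKIntegralTo b a h (-I)

lemma IsGauge.mono {a b p q : ℝ} {δ : ℝ → ℝ} (hδ : IsGauge a b δ) (h : Icc p q ⊆ Icc a b) :
    IsGauge p q δ :=
  fun x hx => hδ x (h hx)

namespace TaggedPartition

variable {p q r : ℝ}

noncomputable def variationSum (P : TaggedPartition p q) (f : ℝ → ℝ) (E : Set ℝ) : ℝ :=
  ∑ i ∈ Finset.range P.n, if P.tag i ∈ E then |f (P.t (i + 1)) - f (P.t i)| else 0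

lemma variationSum_nonneg (P : TaggedPartition p q) (f : ℝ → ℝ) (E : Set ℝ) :
    0 ≤ P.variationSum f E :=
  Finset.sum_nonneg fun _ _ => by positivity

def point (p : ℝ) : TaggedPartition p p :=
  ⟨0, fun _ => p, fun _ => p, rfl, rfl, nofun, nofun⟩

lemma subordinate_point (p : ℝ) (δ : ℝ → ℝ) : (point p).Subordinate δ := nofun

def single (hpq : p ≤ q) (τ : ℝ) (hτ : τ ∈ Icc p q) : TaggedPartition p q where
  n := 1
  t i := if i = 0 then p else q
  tag _ := τ
  t_first := rfl
  t_last := rfl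
  t_mono i hi := by
    obtain rfl : i = 0 := by omega
    simpa using hpq
  tag_mem i hi := by
    obtain rfl : i = 0 := by omega
    simpa using hτ

lemma subordinate_single (hpq : p ≤ q) {τ : ℝ} (hτ : τ ∈ Icc p q) {δ : ℝ → ℝ}
    (h : Icc p q ⊆ Ioo (τ - δ τ) (τ + δ τ)) : (single hpq τ hτ).Subordinate δ := by
  intro i hi
  obtain rfl : i = 0 := by simp only [single] at hi; omega
  simpa [single] using h

lemma variationSum_single (hpq : p ≤ q) {τ : ℝ} (hτ : τ ∈ Icc p q) (f : ℝ → ℝ) {E : Set ℝ}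
    (hτE : τ ∈ E) : (single hpq τ hτ).variationSum f E = |f q - f p| := by
  simp [variationSum, single, hτE]

def append (P : TaggedPartition p q) (Q : TaggedPartition q r) : TaggedPartition p r where
  n := P.n + Q.n
  t i := if i ≤ P.n then P.t i else Q.t (i - P.n)
  tag i := if i < P.n then P.tag i else Q.tag (i - P.n)
  t_first := by simp [P.t_first]
  t_last := by
    split_ifs with h
    · have hQ : Q.n = 0 := by omega
      rw [hQ, Nat.add_zero, P.t_last, ← Q.t_last, hQ, Q.t_first]
    · simpa using Q.t_last
  t_mono i hi := by
    split_ifs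
    · exact P.t_mono i (by omega)
    · obtain rfl : i = P.n := by omega
      simpa [P.t_last, Q.t_first] using Q.t_mono 0 (by omega)
    · omega
    · rw [show i + 1 - P.n = i - P.n + 1 by omega]
      exact Q.t_mono _ (by omega)
  tag_mem i hi := by
    split_ifs
    all_goals try omega
    · exact P.tag_mem i (by omega)
    · obtain rfl : i = P.n := by omega
      simpa [P.t_last, Q.t_first] using Q.tag_mem 0 (by omega)
    · rw [show i + 1 - P.n = i - P.n + 1 by omega]
      exact Q.tag_mem _ (by omega)

lemma append_t_of_le (P : TaggedPartition p q) (Q : TaggedPartition q r) {i : ℕ} (h : i ≤ P.n) :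
    (P.append Q).t i = P.t i :=
  if_pos h

lemma append_t_of_ge (P : TaggedPartition p q) (Q : TaggedPartition q r) {i : ℕ} (h : P.n ≤ i) :
    (P.append Q).t i = Q.t (i - P.n) := by
  obtain rfl | h := h.eq_or_lt
  · simp [append, P.t_last, Q.t_first]
  · exact if_neg h.not_ge

lemma append_tag_of_lt (P : TaggedPartition p q) (Q : TaggedPartition q r) {i : ℕ}
    (h : i < P.n) : (P.append Q).tag i = P.tag i :=
  if_pos h

lemma append_tag_of_ge (P : TaggedPartition p q) (Q : TaggedPartition q r) {i : ℕ}
    (h : P.n ≤ i) : (P.append Q).tag i = Q.tag (i - P.n) :=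
  if_neg h.not_gt

lemma Subordinate.append {P : TaggedPartition p q} {Q : TaggedPartition q r} {δ : ℝ → ℝ}
    (hP : P.Subordinate δ) (hQ : Q.Subordinate δ) : (P.append Q).Subordinate δ := by
  intro i (hi : i < P.n + Q.n)
  obtain hiP | hiP := lt_or_ge i P.n
  · rw [append_t_of_le P Q hiP.le, append_t_of_le P Q hiP, append_tag_of_lt P Q hiP]
    exact hP i hiP
  · rw [append_t_of_ge P Q hiP, append_t_of_ge P Q (by omega : P.n ≤ i + 1),
      append_tag_of_ge P Q hiP, show i + 1 - P.n = i - P.n + 1 by omega]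
    exact hQ (i - P.n) (by omega)

lemma variationSum_append (P : TaggedPartition p q) (Q : TaggedPartition q r) (f : ℝ → ℝ)
    (E : Set ℝ) : (P.append Q).variationSum f E = P.variationSum f E + Q.variationSum f E := by
  unfold variationSum
  rw [show (P.append Q).n = P.n + Q.n from rfl, Finset.sum_range_add]
  congr 1
  · refine Finset.sum_congr rfl fun i hi => ?_
    have hi : i < P.n := Finset.mem_range.1 hi
    rw [append_tag_of_lt P Q hi, append_t_of_le P Q hi.le, append_t_of_le P Q hi]
  · refine Finset.sum_congr rfl fun i _ => ?_
    rw [append_tag_of_ge P Q (by omega), append_t_of_ge P Q (by omega : P.n ≤ P.n + i + 1),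
      append_t_of_ge P Q (by omega), show P.n + i + 1 - P.n = i + 1 by omega,
      Nat.add_sub_cancel_left]

def appendSeq {x : ℕ → ℝ} (P : ∀ k, TaggedPartition (x k) (x (k + 1))) :
    ∀ m, TaggedPartition (x 0) (x m)
  | 0 => point (x 0)
  | m + 1 => (appendSeq P m).append (P m)

lemma subordinate_appendSeq {x : ℕ → ℝ} {P : ∀ k, TaggedPartition (x k) (x (k + 1))}
    {δ : ℝ → ℝ} (hP : ∀ k, (P k).Subordinate δ) (m : ℕ) : (appendSeq P m).Subordinate δ := by
  induction m with
  | zero => exact subordinate_point _ δ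
  | succ m ih => exact ih.append (hP m)

lemma variationSum_appendSeq {x : ℕ → ℝ} (P : ∀ k, TaggedPartition (x k) (x (k + 1)))
    (f : ℝ → ℝ) (E : Set ℝ) (m : ℕ) :
    (appendSeq P m).variationSum f E = ∑ k ∈ Finset.range m, (P k).variationSum f E := by
  induction m with
  | zero => rfl
  | succ m ih => rw [appendSeq, variationSum_append, ih, Finset.sum_range_succ]

theorem exists_subordinate {δ : ℝ → ℝ} (hδ : IsGauge p q δ) (hpq : p ≤ q) :
    ∃ P : TaggedPartition p q, P.Subordinate δ := by
  set S : Set ℝ := {x | x ∈ Icc p q ∧ ∃ P : TaggedPartition p x, P.Subordinate δ}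
  have hpS : p ∈ S := ⟨left_mem_Icc.2 hpq, point p, subordinate_point p δ⟩
  have hbdd : BddAbove S := ⟨q, fun x hx => hx.1.2⟩
  set c := sSup S
  have hcq : c ≤ q := csSup_le ⟨p, hpS⟩ fun x hx => hx.1.2
  have hδc : 0 < δ c := hδ c ⟨le_csSup hbdd hpS, hcq⟩
  obtain ⟨x, hxS, hxc⟩ := exists_lt_of_lt_csSup ⟨p, hpS⟩ (sub_lt_self c hδc)
  have hxc' : x ≤ c := le_csSup hbdd hxS
  obtain ⟨⟨hpx, -⟩, P, hP⟩ := hxS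
  -- one more interval tagged at `c` pushes the partition past `c` unless it already reaches `q`
  set y := min q (c + δ c / 2)
  have hcy : c ≤ y := le_min hcq (by linarith)
  have hyS : y ∈ S := by
    refine ⟨⟨hpx.trans (hxc'.trans hcy), min_le_left _ _⟩,
      P.append (single (hxc'.trans hcy) c ⟨hxc', hcy⟩), hP.append (subordinate_single _ _ ?_)⟩
    intro z hz
    have : y ≤ c + δ c / 2 := min_le_right _ _
    exact ⟨by linarith [hz.1], by linarith [hz.2]⟩
  have hyq : y = q := by
    by_contra hyq
    have : y = c + δ c / 2 := (min_choice q _).resolve_left hyq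
    linarith [le_csSup hbdd hyS]
  exact hyq ▸ hyS.2

theorem exists_subordinate_abs_sub_le {δ : ℝ → ℝ} (hδ : IsGauge p q δ) {u v τ : ℝ} (hpu : p ≤ u)
    (huv : u ≤ v) (hvq : v ≤ q) (hτ : τ ∈ Icc u v) (hδτ : Icc u v ⊆ Ioo (τ - δ τ) (τ + δ τ))
    (f : ℝ → ℝ) {E : Set ℝ} (hτE : τ ∈ E) :
    ∃ P : TaggedPartition p q, P.Subordinate δ ∧ |f v - f u| ≤ P.variationSum f E := by
  obtain ⟨P₁, hP₁⟩ := exists_subordinate (hδ.mono (Icc_subset_Icc le_rfl (huv.trans hvq))) hpu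
  obtain ⟨P₂, hP₂⟩ := exists_subordinate (hδ.mono (Icc_subset_Icc (hpu.trans huv) le_rfl)) hvq
  refine ⟨(P₁.append (single huv τ hτ)).append P₂,
    (hP₁.append (subordinate_single huv hτ hδτ)).append hP₂, ?_⟩
  rw [variationSum_append, variationSum_append, variationSum_single huv hτ f hτE]
  linarith [P₁.variationSum_nonneg f E, P₂.variationSum_nonneg f E]

theorem exists_subordinate_abs_sub_le_of_abs_sub_lt {δ : ℝ → ℝ} (hδ : IsGauge p q δ) {x y : ℝ}
    (hx : x ∈ Icc p q) (hy : y ∈ Icc p q) (hxy : |y - x| < δ x) (f : ℝ → ℝ) {E : Set ℝ}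
    (hxE : x ∈ E) :
    ∃ P : TaggedPartition p q, P.Subordinate δ ∧ |f y - f x| ≤ P.variationSum f E := by
  have hball : ∀ z, |z - x| ≤ |y - x| → z ∈ Ioo (x - δ x) (x + δ x) := fun z hz => by
    obtain ⟨h₁, h₂⟩ := abs_sub_lt_iff.1 (hz.trans_lt hxy)
    constructor <;> linarith
  obtain hle | hle := le_total x y
  · exact exists_subordinate_abs_sub_le hδ hx.1 hle hy.2 (left_mem_Icc.2 hle)
      (fun z hz => hball z (by rw [abs_of_nonneg, abs_of_nonneg] <;> linarith [hz.1, hz.2])) f hxE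
  · rw [abs_sub_comm]
    exact exists_subordinate_abs_sub_le hδ hy.1 hle hx.2 (right_mem_Icc.2 hle)
      (fun z hz => hball z (by rw [abs_of_nonpos, abs_of_nonpos] <;> linarith [hz.1, hz.2])) f hxE

theorem exists_subordinate_indicator_le {p q : ℝ} (hpq : p ≤ q) {δ : ℝ → ℝ}
    (hδ : IsGauge p q δ) (g : ℝ → ℝ) {E S : Set ℝ} (hSE : S ⊆ E) (hS : S ⊆ Icc p q)
    (hSδ : ∀ x ∈ S, ∀ y ∈ S, |y - x| < δ x) (z : ℝ × ℝ) :
    ∃ P : TaggedPartition p q, P.Subordinate δ ∧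
      (S ×ˢ S).indicator (fun z => edist (g z.1) (g z.2)) z ≤
        ENNReal.ofReal (P.variationSum g E) := by
  by_cases hz : z ∈ S ×ˢ S
  · obtain ⟨P, hP, hle⟩ := exists_subordinate_abs_sub_le_of_abs_sub_lt hδ (hS hz.1) (hS hz.2)
      (hSδ _ hz.1 _ hz.2) g (hSE hz.1)
    refine ⟨P, hP, ?_⟩
    rwa [indicator_of_mem hz, edist_le_ofReal (P.variationSum_nonneg g E), Real.dist_eq,
      abs_sub_comm]
  · obtain ⟨P, hP⟩ := exists_subordinate hδ hpq
    exact ⟨P, hP, by rw [indicator_of_notMem hz]; exact zero_le⟩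

end TaggedPartition

open scoped ENNReal

lemma ENNReal.finsetSum_iSup_le {ι κ : Type*} {s : Finset ι} {F : ι → κ → ℝ≥0∞} {c : ℝ≥0∞}
    (h : ∀ φ : ι → κ, ∑ i ∈ s, F i (φ i) ≤ c) : ∑ i ∈ s, ⨆ z, F i z ≤ c := by
  have hdir : ∀ φ ψ : ι → κ, ∃ χ : ι → κ, ∀ i, F i (φ i) ≤ F i (χ i) ∧ F i (ψ i) ≤ F i (χ i) :=
    fun φ ψ => ⟨fun i => if F i (φ i) ≤ F i (ψ i) then ψ i else φ i, fun i => by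
      dsimp only
      split_ifs with hi
      · exact ⟨hi, le_rfl⟩
      · exact ⟨le_rfl, (not_le.1 hi).le⟩⟩
  calc ∑ i ∈ s, ⨆ z, F i z = ∑ i ∈ s, ⨆ φ : ι → κ, F i (φ i) :=
        Finset.sum_congr rfl fun i _ =>
          (Function.Surjective.iSup_comp (f := fun φ : ι → κ => φ i)
            (fun z => ⟨fun _ => z, rfl⟩) (F i)).symm
    _ = ⨆ φ : ι → κ, ∑ i ∈ s, F i (φ i) := ENNReal.finsetSum_iSup hdir
    _ ≤ c := iSup_le h

lemma Metric.ediam_image_le_iSup_indicator {α X : Type*} [PseudoEMetricSpace X] (g : α → X)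
    (S : Set α) :
    ediam (g '' S) ≤ ⨆ z : α × α, (S ×ˢ S).indicator (fun z => edist (g z.1) (g z.2)) z :=
  ediam_image_le_iff.2 fun x hx y hy =>
    le_iSup_of_le (x, y) (by rw [indicator_of_mem (mk_mem_prod hx hy)])

lemma Monotone.exists_mem_Icc_succ {c : ℕ → ℝ} (hc : Monotone c) {m : ℕ} (hm : 0 < m) {x : ℝ}
    (hx : x ∈ Icc (c 0) (c m)) : ∃ k < m, x ∈ Icc (c k) (c (k + 1)) := by
  obtain rfl | hx0 := hx.1.eq_or_lt
  · exact ⟨0, hm, left_mem_Icc.2 (hc (Nat.zero_le 1))⟩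
  have : x ∈ ⋃ k ∈ Ico 0 m, Ioc (c k) (c (Order.succ k)) := by
    rw [hc.biUnion_Ico_Ioc_map_succ]
    exact ⟨hx0, hx.2⟩
  obtain ⟨k, hk, hxk⟩ := mem_iUnion₂.1 this
  exact ⟨k, hk.2, Ioc_subset_Icc_self hxk⟩

theorem exists_monotone_grid {a b r : ℝ} (hab : a ≤ b) (hr : 0 < r) :
    ∃ m : ℕ, 0 < m ∧ ∃ c : ℕ → ℝ, Monotone c ∧ c 0 = a ∧ c m = b ∧ (∀ k, c k ∈ Icc a b) ∧
      ∀ k, c (k + 1) - c k < r := by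
  obtain ⟨m, hm⟩ := exists_nat_gt ((b - a) / r)
  have hm0 : (0 : ℝ) < m := (div_nonneg (sub_nonneg.2 hab) hr.le).trans_lt hm
  set L := (b - a) / m
  have hL0 : 0 ≤ L := div_nonneg (sub_nonneg.2 hab) hm0.le
  have hLr : L < r := by
    rw [div_lt_iff₀ hr] at hm
    rwa [div_lt_iff₀ hm0, mul_comm]
  refine ⟨m, Nat.cast_pos.1 hm0, fun k => min b (a + k * L), fun j k hjk => ?_, by simp [hab], ?_,
    fun k => ⟨le_min hab (le_add_of_nonneg_right (by positivity)), min_le_left _ _⟩, fun k => ?_⟩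
  · exact min_le_min_left b (by gcongr)
  · simp [L, mul_div_cancel₀ _ hm0.ne']
  · calc min b (a + (k + 1 : ℕ) * L) - min b (a + k * L) ≤ L := by
          rw [sub_le_iff_le_add', ← min_add_add_right]
          push_cast
          exact min_le_min (le_add_of_nonneg_right hL0) (by linarith)
      _ < r := hLr

open TaggedPartition in
theorem volume_image_le_of_lt_gauge {a b : ℝ} (hab : a ≤ b) {g δ : ℝ → ℝ} {E : Set ℝ}
    (hE : E ⊆ Icc a b) (hδ : IsGauge a b δ) {ε : ℝ}
    (hε : ∀ P : TaggedPartition a b, P.Subordinate δ → P.variationSum g E < ε) {r : ℝ}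
    (hr : 0 < r) : volume (g '' {x ∈ E | r < δ x}) ≤ ENNReal.ofReal ε := by
  obtain ⟨m, hm, c, hc, hc0, hcm, hcab, hstep⟩ := exists_monotone_grid hab hr
  set F := {x ∈ E | r < δ x}
  set S : ℕ → Set ℝ := fun k => F ∩ Icc (c k) (c (k + 1))
  have hcover : g '' F ⊆ ⋃ k ∈ Finset.range m, g '' S k := by
    rintro _ ⟨x, hx, rfl⟩
    obtain ⟨k, hk, hxk⟩ := hc.exists_mem_Icc_succ hm (hc0 ▸ hcm ▸ hE hx.1)
    exact mem_biUnion (Finset.mem_range.2 hk) (mem_image_of_mem g ⟨hx, hxk⟩)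
  have hSδ : ∀ k, ∀ x ∈ S k, ∀ y ∈ S k, |y - x| < δ x := fun k x hx y hy =>
    have : |y - x| < r := abs_sub_lt_iff.2
      ⟨by linarith [hy.2.2, hx.2.1, hstep k], by linarith [hx.2.2, hy.2.1, hstep k]⟩
    this.trans hx.1.2
  have hpairs : ∀ φ : ℕ → ℝ × ℝ, ∑ k ∈ Finset.range m,
      (S k ×ˢ S k).indicator (fun z => edist (g z.1) (g z.2)) (φ k) ≤ ENNReal.ofReal ε := by
    intro φ
    have hcell (k : ℕ) := exists_subordinate_indicator_le (S := S k) (hc k.le_succ)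
      (hδ.mono (Icc_subset_Icc (hcab k).1 (hcab (k + 1)).2)) g (fun x hx => hx.1.1)
      inter_subset_right (hSδ k) (φ k)
    choose P hP hPle using hcell
    have hε' : ∀ Q : TaggedPartition (c 0) (c m), Q.Subordinate δ → Q.variationSum g E < ε := by
      rw [hc0, hcm]
      exact hε
    calc _ ≤ ∑ k ∈ Finset.range m, ENNReal.ofReal ((P k).variationSum g E) :=
          Finset.sum_le_sum fun k _ => hPle k
      _ = ENNReal.ofReal ((appendSeq P m).variationSum g E) := by
          rw [variationSum_appendSeq,
            ENNReal.ofReal_sum_of_nonneg fun k _ => (P k).variationSum_nonneg g E]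
      _ ≤ ENNReal.ofReal ε := ENNReal.ofReal_le_ofReal (hε' _ (subordinate_appendSeq hP m)).le
  calc volume (g '' F) ≤ volume (⋃ k ∈ Finset.range m, g '' S k) := measure_mono hcover
    _ ≤ ∑ k ∈ Finset.range m, volume (g '' S k) := measure_biUnion_finset_le _ _
    _ ≤ ∑ k ∈ Finset.range m, ⨆ z, (S k ×ˢ S k).indicator (fun z => edist (g z.1) (g z.2)) z :=
        Finset.sum_le_sum fun k _ =>
          (Real.volume_le_diam _).trans (Metric.ediam_image_le_iSup_indicator g (S k))
    _ ≤ ENNReal.ofReal ε := ENNReal.finsetSum_iSup_le hpairs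

theorem volume_image_le_of_forall_variationSum_lt {a b : ℝ} (hab : a ≤ b) {g δ : ℝ → ℝ}
    {E : Set ℝ} (hE : E ⊆ Icc a b) (hδ : IsGauge a b δ) {ε : ℝ}
    (hε : ∀ P : TaggedPartition a b, P.Subordinate δ → P.variationSum g E < ε) :
    volume (g '' E) ≤ ENNReal.ofReal ε := by
  have hexh : E = ⋃ n : ℕ, {x ∈ E | 1 / (n + 1 : ℝ) < δ x} := by
    ext x
    simp only [mem_iUnion, mem_ofPred_eq]
    exact ⟨fun hx => (exists_nat_one_div_lt (hδ x (hE hx))).imp fun n hn => ⟨hx, hn⟩,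
      fun ⟨_, hx, _⟩ => hx⟩
  have hmono : Monotone fun n : ℕ => g '' {x ∈ E | 1 / (n + 1 : ℝ) < δ x} :=
    fun j k hjk => image_mono fun x hx => ⟨hx.1, lt_of_le_of_lt (by gcongr) hx.2⟩
  rw [hexh, image_iUnion, hmono.measure_iUnion]
  exact iSup_le fun n => volume_image_le_of_lt_gauge hab hE hδ hε (by positivity)

/-- if `g` has negligible variation on `E`, then `g(E)` has measure zero. -/
theorem stmt6 (a b : ℝ) (g : ℝ → ℝ) (E : Set ℝ) (hE : E ⊆ Set.Icc a b)
    (h : NegVar a b g E) :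
    MeasureTheory.volume (g '' E) = 0 := by
  obtain hba | hab := lt_or_ge b a
  · rw [subset_empty_iff.1 (hE.trans (Icc_eq_empty_of_lt hba).subset), image_empty, measure_empty]
  refine le_antisymm (ENNReal.le_of_forall_pos_le_add fun ε hε _ => ?_) zero_le
  obtain ⟨δ, hδ, hvar⟩ := h ε hε
  simpa using volume_image_le_of_forall_variationSum_lt hab hE hδ hvar
end

section
/- Assume g : [a,b] → D and F : D → ℝ have derivatives almost everywhere and f = F' almost everywhere. Then F∘g has negligible variation on the set B where (F∘g)' = (f∘g)·g' fails if and only if F∘g has negligible variation on every null subset of [a,b] and on the set {x : g'(x) = 0}. -/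
/-!
Off the null set where `g` is not differentiable, a point of `B` either has `g' = 0`, or has
`g' ≠ 0` and `g x` in the null set where `F' = f` fails. Near a point where `g' ≠ 0` the map `g`
is expanding, so it pulls null sets back to null sets, and `B` is contained in the union of a
null set and `{g' = 0}`. Conversely, `F ∘ g` is differentiable off `B`, with derivative `0` where
`g' = 0`; and a function has negligible variation on a null set on which it is differentiable, as
well as on a set where its derivative vanishes.
-/

open Set MeasureTheory Filter
open scoped Classical

open scoped Topology

namespace TaggedPartition

variable {a b : ℝ} (P : TaggedPartition a b)

theorem t_le_t {i j : ℕ} (hij : i ≤ j) (hj : j ≤ P.n) : P.t i ≤ P.t j := by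
  induction j, hij using Nat.le_induction with
  | base => rfl
  | succ k _ ih => exact (ih (by omega)).trans (P.t_mono k (by omega))

theorem pairwiseDisjoint_Ioc :
    (Set.Iio P.n).PairwiseDisjoint fun i => Ioc (P.t i) (P.t (i + 1)) := by
  intro i hi j hj hij
  rcases hij.lt_or_gt with h | h
  · exact Ioc_disjoint_Ioc_of_le (P.t_le_t h (le_of_lt hj))
  · exact (Ioc_disjoint_Ioc_of_le (P.t_le_t h (le_of_lt hi))).symm

theorem sum_length : ∑ i ∈ Finset.range P.n, (P.t (i + 1) - P.t i) = b - a := by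
  rw [Finset.sum_range_sub, P.t_first, P.t_last]

theorem ofReal_sum_length_le_volume {T : Finset ℕ} (hT : ∀ i ∈ T, i < P.n) {U : Set ℝ}
    (hU : ∀ i ∈ T, Ioc (P.t i) (P.t (i + 1)) ⊆ U) :
    ENNReal.ofReal (∑ i ∈ T, (P.t (i + 1) - P.t i)) ≤ volume U := by
  rw [ENNReal.ofReal_sum_of_nonneg fun i hi => sub_nonneg.2 (P.t_mono i (hT i hi))]
  simp_rw [← Real.volume_Ioc]
  rw [← measure_biUnion_finset (P.pairwiseDisjoint_Ioc.subset hT) fun _ _ => measurableSet_Ioc]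
  exact measure_mono (iUnion₂_subset hU)

variable {P} {δ : ℝ → ℝ}

theorem Subordinate.mono {δ' : ℝ → ℝ} (hP : P.Subordinate δ) (h : ∀ x, δ x ≤ δ' x) :
    P.Subordinate δ' := fun i hi =>
  (hP i hi).trans (Ioo_subset_Ioo (by linarith [h (P.tag i)]) (by linarith [h (P.tag i)]))

theorem Subordinate.dist_lt (hP : P.Subordinate δ) {i : ℕ} (hi : i < P.n) {y : ℝ}
    (hy : y ∈ Icc (P.t i) (P.t (i + 1))) : dist y (P.tag i) < δ (P.tag i) := by
  obtain ⟨h₁, h₂⟩ := hP i hi hy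
  rw [Real.dist_eq, abs_sub_lt_iff]
  constructor <;> linarith

theorem Subordinate.abs_sub_le_mul (hP : P.Subordinate δ) {i : ℕ} (hi : i < P.n) {h : ℝ → ℝ}
    {C : ℝ} (hC : ∀ y, dist y (P.tag i) < δ (P.tag i) → |h y - h (P.tag i)| ≤ C * |y - P.tag i|) :
    |h (P.t (i + 1)) - h (P.t i)| ≤ C * (P.t (i + 1) - P.t i) := by
  obtain ⟨hl, hr⟩ := P.tag_mem i hi
  have hu := hC _ (hP.dist_lt hi ⟨le_rfl, hl.trans hr⟩)
  have hv := hC _ (hP.dist_lt hi ⟨hl.trans hr, le_rfl⟩)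
  rw [abs_of_nonpos (sub_nonpos.2 hl)] at hu
  rw [abs_of_nonneg (sub_nonneg.2 hr)] at hv
  calc |h (P.t (i + 1)) - h (P.t i)|
      ≤ |h (P.t (i + 1)) - h (P.tag i)| + |h (P.t i) - h (P.tag i)| := by
        simpa only [abs_sub_comm (h (P.tag i))] using _root_.abs_sub_le _ (h (P.tag i)) _
    _ ≤ C * (P.t (i + 1) - P.t i) := by linarith

theorem Subordinate.sum_abs_sub_le {S : Set ℝ} {h C : ℝ → ℝ}
    (hδ : ∀ x ∈ S, ∀ y, dist y x < δ x → |h y - h x| ≤ C x * |y - x|) (hP : P.Subordinate δ) :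
    (∑ i ∈ Finset.range P.n, if P.tag i ∈ S then |h (P.t (i + 1)) - h (P.t i)| else 0) ≤
      ∑ i ∈ (Finset.range P.n).filter (P.tag · ∈ S), C (P.tag i) * (P.t (i + 1) - P.t i) := by
  rw [← Finset.sum_filter]
  refine Finset.sum_le_sum fun i hi => ?_
  rw [Finset.mem_filter, Finset.mem_range] at hi
  exact hP.abs_sub_le_mul hi.1 (hδ _ hi.2)

end TaggedPartition

theorem exists_gauge_of_eventually {S : Set ℝ} {p : ℝ → ℝ → Prop}
    (h : ∀ x ∈ S, ∀ᶠ y in 𝓝 x, p x y) :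
    ∃ δ : ℝ → ℝ, (∀ x, 0 < δ x) ∧ ∀ x ∈ S, ∀ y, dist y x < δ x → p x y := by
  have : ∀ x, ∃ d > 0, x ∈ S → ∀ y, dist y x < d → p x y := fun x => by
    by_cases hx : x ∈ S
    · obtain ⟨d, hd, hp⟩ := Metric.eventually_nhds_iff.1 (h x hx)
      exact ⟨d, hd, fun _ y hy => hp hy⟩
    · exact ⟨1, one_pos, fun hx' => absurd hx' hx⟩
  choose δ hδ hp using this
  exact ⟨δ, hδ, hp⟩

theorem HasDerivAt.eventually_abs_sub_le {h : ℝ → ℝ} {L x c : ℝ} (hd : HasDerivAt h L x)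
    (hc : |L| < c) : ∀ᶠ y in 𝓝 x, |h y - h x| ≤ c * |y - x| := by
  filter_upwards [(hasDerivAt_iff_isLittleO.1 hd).def (sub_pos.2 hc)] with y hy
  simp only [Real.norm_eq_abs, smul_eq_mul] at hy
  have := abs_sub_abs_le_abs_sub (h y - h x) ((y - x) * L)
  rw [abs_mul] at this
  linarith

theorem HasDerivAt.eventually_le_abs_sub {h : ℝ → ℝ} {L x c : ℝ} (hd : HasDerivAt h L x)
    (hc : c < |L|) : ∀ᶠ y in 𝓝 x, c * |y - x| ≤ |h y - h x| := by
  filter_upwards [(hasDerivAt_iff_isLittleO.1 hd).def (sub_pos.2 hc)] with y hy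
  simp only [Real.norm_eq_abs, smul_eq_mul] at hy
  have := abs_sub_abs_le_abs_sub ((y - x) * L) (h y - h x)
  rw [abs_mul, abs_sub_comm ((y - x) * L)] at this
  linarith

section NegVar

variable {a b : ℝ} {h : ℝ → ℝ} {S : Set ℝ}

theorem NegVar.mono {E E' : Set ℝ} (hE : NegVar a b h E) (hsub : E' ⊆ E) : NegVar a b h E' := by
  intro ε hε
  obtain ⟨δ, hδ, H⟩ := hE ε hε
  refine ⟨δ, hδ, fun P hP => (Finset.sum_le_sum fun i _ => ?_).trans_lt (H P hP)⟩
  by_cases hi : P.tag i ∈ E'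
  · simp [hi, hsub hi]
  · rw [if_neg hi]
    split_ifs <;> positivity

theorem NegVar.union {E₁ E₂ : Set ℝ} (h₁ : NegVar a b h E₁) (h₂ : NegVar a b h E₂) :
    NegVar a b h (E₁ ∪ E₂) := by
  intro ε hε
  obtain ⟨δ₁, hδ₁, H₁⟩ := h₁ (ε / 2) (half_pos hε)
  obtain ⟨δ₂, hδ₂, H₂⟩ := h₂ (ε / 2) (half_pos hε)
  refine ⟨fun x => min (δ₁ x) (δ₂ x), fun x hx => lt_min (hδ₁ x hx) (hδ₂ x hx), fun P hP => ?_⟩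
  have hP₁ := H₁ P (hP.mono fun x => min_le_left _ _)
  have hP₂ := H₂ P (hP.mono fun x => min_le_right _ _)
  have hsum := add_lt_add hP₁ hP₂
  rw [← Finset.sum_add_distrib, add_halves] at hsum
  refine lt_of_le_of_lt (Finset.sum_le_sum fun i _ => ?_) hsum
  by_cases hi₁ : P.tag i ∈ E₁ <;> by_cases hi₂ : P.tag i ∈ E₂ <;> simp [hi₁, hi₂]


theorem negVar_of_hasDerivAt_zero (hd : ∀ x ∈ S, HasDerivAt h 0 x) : NegVar a b h S := by
  intro ε hε
  set c := ε / (|b - a| + 1)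
  have hc : 0 < c := by positivity
  obtain ⟨δ, hδ0, hδ⟩ := exists_gauge_of_eventually fun x hx =>
    (hd x hx).eventually_abs_sub_le (c := c) (by simpa using hc)
  refine ⟨δ, fun x _ => hδ0 x, fun P hP => ?_⟩
  calc _ ≤ ∑ i ∈ (Finset.range P.n).filter (P.tag · ∈ S), c * (P.t (i + 1) - P.t i) :=
        hP.sum_abs_sub_le (C := fun _ => c) hδ
    _ ≤ ∑ i ∈ Finset.range P.n, c * (P.t (i + 1) - P.t i) :=
        Finset.sum_le_sum_of_subset_of_nonneg (Finset.filter_subset _ _) fun i hi _ =>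
          mul_nonneg hc.le (sub_nonneg.2 (P.t_mono i (Finset.mem_range.1 hi)))
    _ = c * (b - a) := by rw [← Finset.mul_sum, P.sum_length]
    _ < c * (|b - a| + 1) := by gcongr; linarith [le_abs_self (b - a)]
    _ = ε := div_mul_cancel₀ _ (by positivity)

/-- Stratify `S` by an integer bound `m x` for the derivative and enclose it, for each level `k`,
in an open set `U k` of measure `< ε 2⁻ᵏ / (4 (k + 1))`: the intervals tagged at level `k` are
non-overlapping and lie in `U k`, so they contribute at most `ε 2⁻ᵏ / 4`. -/
theorem negVar_of_measure_zero (hS : volume S = 0) (hd : ∀ x ∈ S, DifferentiableAt ℝ h x) :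
    NegVar a b h S := by
  intro ε hε
  set r : ℕ → ℝ := fun k => ε / 4 * (1 / 2) ^ k / (k + 1)
  have hU : ∀ k, ∃ U ⊇ S, IsOpen U ∧ volume U < ENNReal.ofReal (r k) := fun k =>
    S.exists_isOpen_lt_of_lt _ (by rw [hS]; exact ENNReal.ofReal_pos.2 (by positivity))
  choose U hSU hUo hUr using hU
  have hm : ∀ x ∈ S, ∃ m : ℕ, ∀ᶠ y in 𝓝 x, |h y - h x| ≤ m * |y - x| := fun x hx =>
    ⟨⌊|deriv h x|⌋₊ + 1, (hd x hx).hasDerivAt.eventually_abs_sub_le (by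
      push_cast; exact Nat.lt_floor_add_one _)⟩
  choose! m hm using hm
  obtain ⟨δ, hδ0, hδ⟩ := exists_gauge_of_eventually fun x hx =>
    (hm x hx).and ((hUo (m x)).mem_nhds (hSU _ hx))
  refine ⟨δ, fun x _ => hδ0 x, fun P hP => ?_⟩
  set T := (Finset.range P.n).filter (P.tag · ∈ S)
  have hT : ∀ i ∈ T, i < P.n ∧ P.tag i ∈ S := fun i hi => by
    simpa only [T, Finset.mem_filter, Finset.mem_range] using hi
  have hlevel : ∀ k : ℕ,
      (k : ℝ) * ∑ i ∈ T.filter (fun i => m (P.tag i) = k), (P.t (i + 1) - P.t i) ≤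
        ε / 4 * (1 / 2) ^ k := fun k => by
    have hlen : ∑ i ∈ T.filter (fun i => m (P.tag i) = k), (P.t (i + 1) - P.t i) ≤ r k := by
      refine (ENNReal.ofReal_le_ofReal_iff (by positivity)).1
        ((P.ofReal_sum_length_le_volume (fun i hi => ?_) fun i hi y hy => ?_).trans (hUr k).le)
      · exact (hT i (Finset.mem_filter.1 hi).1).1
      · obtain ⟨hiT, rfl⟩ := Finset.mem_filter.1 hi
        exact (hδ _ (hT i hiT).2 y (hP.dist_lt (hT i hiT).1 (Ioc_subset_Icc_self hy))).2
    calc (k : ℝ) * _ ≤ k * r k := by gcongr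
      _ ≤ ε / 4 * (1 / 2) ^ k := by
        rw [mul_div_assoc', div_le_iff₀ (by positivity)]
        nlinarith [show 0 ≤ ε / 4 * (1 / 2 : ℝ) ^ k by positivity]
  calc _ ≤ ∑ i ∈ T, (m (P.tag i) : ℝ) * (P.t (i + 1) - P.t i) :=
        hP.sum_abs_sub_le fun x hx y hy => (hδ x hx y hy).1
    _ = ∑ k ∈ T.image (m ∘ P.tag), (k : ℝ) *
          ∑ i ∈ T.filter (fun i => m (P.tag i) = k), (P.t (i + 1) - P.t i) := by
        rw [← Finset.sum_fiberwise_of_maps_to fun i hi => Finset.mem_image_of_mem (m ∘ P.tag) hi]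
        refine Finset.sum_congr rfl fun k _ => ?_
        rw [Finset.mul_sum]
        exact Finset.sum_congr rfl fun i hi => by rw [(Finset.mem_filter.1 hi).2]
    _ ≤ ∑' k : ℕ, ε / 4 * (1 / 2) ^ k :=
        (Finset.sum_le_sum fun k _ => hlevel k).trans <| Summable.sum_le_tsum _
          (fun _ _ => by positivity) (summable_geometric_two.mul_left _)
    _ < ε := by rw [tsum_mul_left, tsum_geometric_two]; linarith

end NegVar

theorem measure_sep_not_eq_zero_of_ae_restrict {α : Type*} [MeasurableSpace α] {μ : Measure α}
    {s : Set α} {p : α → Prop} (h : ∀ᵐ x ∂μ.restrict s, p x) : μ {x ∈ s | ¬ p x} = 0 :=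
  have hnull : μ ({x | ¬ p x} ∩ s) = 0 :=
    nonpos_iff_eq_zero.1 ((Measure.le_restrict_apply s _).trans (ae_iff.1 h).le)
  measure_mono_null (by intro x hx; exact ⟨hx.2, hx.1⟩) hnull

theorem volume_null_of_image_null_of_dist_le_mul {g : ℝ → ℝ} {s : Set ℝ} {K : ℝ}
    (hK : ∀ x ∈ s, ∀ y ∈ s, dist x y ≤ K * dist (g x) (g y)) (hs : volume (g '' s) = 0) :
    volume s = 0 := by
  set φ := Function.invFunOn g s
  have hφ : ∀ x ∈ s, φ (g x) ∈ s ∧ g (φ (g x)) = g x := fun x hx =>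
    ⟨Function.invFunOn_mem ⟨x, hx, rfl⟩, Function.invFunOn_eq ⟨x, hx, rfl⟩⟩
  have hlip : LipschitzOnWith K.toNNReal φ (g '' s) := by
    refine LipschitzOnWith.of_dist_le' ?_
    rintro _ ⟨x, hx, rfl⟩ _ ⟨y, hy, rfl⟩
    simpa only [(hφ x hx).2, (hφ y hy).2] using hK _ (hφ x hx).1 _ (hφ y hy).1
  have hsub : s ⊆ φ '' (g '' s) := fun x hx => by
    refine ⟨g x, mem_image_of_mem g hx, dist_le_zero.1 ?_⟩
    simpa only [(hφ x hx).2, dist_self, mul_zero] using hK _ (hφ x hx).1 x hx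
  have himage := hlip.hausdorffMeasure_image_le zero_le_one
  rw [hausdorffMeasure_real, hs, mul_zero] at himage
  exact measure_mono_null hsub (nonpos_iff_eq_zero.1 himage)

/-- Where `g' ≠ 0`, `g` is expanding at some scale `1 / (q + 1)`; cutting the line into cells of
that length makes `g` uniformly expanding on each piece. -/
theorem volume_null_of_image_null_of_hasDerivAt_ne_zero {g : ℝ → ℝ} {A : Set ℝ}
    (hA : ∀ x ∈ A, ∃ L ≠ 0, HasDerivAt g L x) (hgA : volume (g '' A) = 0) : volume A = 0 := by
  set E : ℕ → ℤ → Set ℝ := fun q k => {x ∈ A | ⌊x * (q + 1)⌋ = k ∧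
    ∀ y, dist y x < 1 / (q + 1) → dist y x ≤ (q + 1) * dist (g y) (g x)}
  have hcover : A ⊆ ⋃ (q : ℕ) (k : ℤ), E q k := fun x hx => by
    obtain ⟨L, hL, hd⟩ := hA x hx
    obtain ⟨d, hd0, hdx⟩ := Metric.eventually_nhds_iff.1
      (hd.eventually_le_abs_sub (half_lt_self (abs_pos.2 hL)))
    obtain ⟨q, hq⟩ := exists_nat_one_div_lt (lt_min hd0 (half_pos (abs_pos.2 hL)))
    refine mem_iUnion₂.2 ⟨q, _, hx, rfl, fun y hy => ?_⟩
    have hexp := (mul_le_mul_of_nonneg_right (hq.trans_le (min_le_right _ _)).le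
      (abs_nonneg (y - x))).trans (hdx (hy.trans (hq.trans_le (min_le_left _ _))))
    rwa [one_div, inv_mul_le_iff₀ (by positivity), ← Real.dist_eq, ← Real.dist_eq] at hexp
  have hE : ∀ q k, volume (E q k) = 0 := fun q k => by
    refine volume_null_of_image_null_of_dist_le_mul (fun x hx y hy => hy.2.2 x ?_)
      (measure_mono_null (image_mono fun _ hx => hx.1) hgA)
    have hcell := Int.abs_sub_lt_one_of_floor_eq_floor (hx.2.1.trans hy.2.1.symm)
    rw [← sub_mul, abs_mul, abs_of_pos (by positivity : (0 : ℝ) < q + 1)] at hcell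
    rwa [Real.dist_eq, lt_div_iff₀ (by positivity)]
  exact measure_mono_null hcover (measure_iUnion_null fun q => measure_iUnion_null (hE q))

theorem not_differentiableAt_or_hasDerivAt_zero_or_not_hasDerivAt_comp {g F f : ℝ → ℝ} {x : ℝ}
    (h : ¬ ∃ L, HasDerivAt g L x ∧ HasDerivAt (F ∘ g) (f (g x) * L) x) :
    ¬ DifferentiableAt ℝ g x ∨ HasDerivAt g 0 x ∨
      (∃ L ≠ 0, HasDerivAt g L x) ∧ ¬ (DifferentiableAt ℝ F (g x) ∧ deriv F (g x) = f (g x)) := by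
  by_cases hg : DifferentiableAt ℝ g x
  · by_cases hL : deriv g x = 0
    · exact .inr (.inl (hL ▸ hg.hasDerivAt))
    · refine .inr (.inr ⟨⟨_, hL, hg.hasDerivAt⟩, fun ⟨hF, hFf⟩ => h ⟨_, hg.hasDerivAt, ?_⟩⟩)
      exact hFf ▸ hF.hasDerivAt.comp x hg.hasDerivAt
  · exact .inl hg

theorem stmt11_general (a b : ℝ) (D : Set ℝ) (g F f : ℝ → ℝ)
    (hD : Set.MapsTo g (Set.Icc a b) D)
    (hg : ∀ᵐ x ∂(MeasureTheory.volume.restrict (Set.Icc a b)), DifferentiableAt ℝ g x)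
    (hF : ∀ᵐ x ∂(MeasureTheory.volume.restrict D), DifferentiableAt ℝ F x)
    (hf : ∀ᵐ x ∂(MeasureTheory.volume.restrict D), deriv F x = f x) :
    NegVar a b (F ∘ g) {x ∈ Set.Icc a b |
        ¬ ∃ L : ℝ, HasDerivAt g L x ∧ HasDerivAt (F ∘ g) (f (g x) * L) x}
      ↔ (∀ Z : Set ℝ, Z ⊆ Set.Icc a b → MeasureTheory.volume Z = 0 → NegVar a b (F ∘ g) Z) ∧
        NegVar a b (F ∘ g) {x ∈ Set.Icc a b | HasDerivAt g 0 x} := by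
  constructor
  · intro hB
    refine ⟨fun Z hZ hZ0 => ?_, ?_⟩
    · refine (hB.union (negVar_of_measure_zero (measure_mono_null (sep_subset _ _) hZ0)
        fun x hx => hx.2)).mono fun x hx => or_iff_not_imp_left.2 fun hxB => ?_
      obtain ⟨L, -, hL⟩ := not_not.1 fun h => hxB ⟨hZ hx, h⟩
      exact ⟨hx, hL.differentiableAt⟩
    · refine (hB.union (negVar_of_hasDerivAt_zero (S := {x | HasDerivAt (F ∘ g) 0 x})
        fun x hx => hx)).mono fun x hx => or_iff_not_imp_left.2 fun hxB => ?_
      obtain ⟨L, hgL, hL⟩ := not_not.1 fun h => hxB ⟨hx.1, h⟩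
      rwa [hgL.unique hx.2, mul_zero] at hL
  · rintro ⟨hnull, hzero⟩
    set Y := {y ∈ D | ¬ (DifferentiableAt ℝ F y ∧ deriv F y = f y)}
    have hN := measure_sep_not_eq_zero_of_ae_restrict hg
    have hA : volume {x ∈ Icc a b | (∃ L ≠ 0, HasDerivAt g L x) ∧ g x ∈ Y} = 0 :=
      volume_null_of_image_null_of_hasDerivAt_ne_zero (fun x hx => hx.2.1) <|
        measure_mono_null (image_subset_iff.2 fun x hx => hx.2.2 : _ ⊆ Y)
          (measure_sep_not_eq_zero_of_ae_restrict (hF.and hf))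
    refine (((hnull _ (sep_subset _ _) hN).union hzero).union (hnull _ (sep_subset _ _) hA)).mono ?_
    rintro x ⟨hx, hxB⟩
    rcases not_differentiableAt_or_hasDerivAt_zero_or_not_hasDerivAt_comp hxB with h | h | h
    exacts [.inl (.inl ⟨hx, h⟩), .inl (.inr ⟨hx, h⟩), .inr ⟨hx, h.1, hD hx, h.2⟩]

/-- `F ∘ g` has negligible variation on the set `B` where
`(F ∘ g)' = (f ∘ g) · g'` fails iff it has negligible variation on every null subset of
`[a,b]` and on the set where `g' = 0`. -/
theorem stmt11 (a b : ℝ) (hab : a ≤ b) (D : Set ℝ) (g F f : ℝ → ℝ)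
    (hD : Set.MapsTo g (Set.Icc a b) D)
    (hg : ∀ᵐ x ∂(MeasureTheory.volume.restrict (Set.Icc a b)), DifferentiableAt ℝ g x)
    (hF : ∀ᵐ x ∂(MeasureTheory.volume.restrict D), DifferentiableAt ℝ F x)
    (hf : ∀ᵐ x ∂(MeasureTheory.volume.restrict D), deriv F x = f x) :
    NegVar a b (F ∘ g) {x ∈ Set.Icc a b |
        ¬ ∃ L : ℝ, HasDerivAt g L x ∧ HasDerivAt (F ∘ g) (f (g x) * L) x}
      ↔ (∀ Z : Set ℝ, Z ⊆ Set.Icc a b → MeasureTheory.volume Z = 0 → NegVar a b (F ∘ g) Z) ∧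
        NegVar a b (F ∘ g) {x ∈ Set.Icc a b | HasDerivAt g 0 x} :=
  stmt11_general a b D g F f hD hg hF hf
end

section
/- Let c be the Cantor–Lebesgue function on [0,1], extended to [−1,1] by x ↦ c(|x|), and let D = C ∪ (−C) where C is the Cantor set. Then the function x ↦ c(|x|) has negligible conditional variation on D (as a subset of [−1,1]) but does not have negligible variation on D. -/
open Set MeasureTheory Filter
open scoped Classical

lemma TaggedPartition.t_le_t_s12 {a b : ℝ} (P : TaggedPartition a b) {i j : ℕ}
    (hij : i ≤ j) (hj : j ≤ P.n) : P.t i ≤ P.t j := by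
  revert hj
  induction j, hij using Nat.le_induction with
  | base => intro _; exact le_rfl
  | succ k hk ih => intro hj; exact le_trans (ih (by omega)) (P.t_mono k (by omega))

lemma TaggedPartition.t_mem {a b : ℝ} (P : TaggedPartition a b) {i : ℕ} (hi : i ≤ P.n) :
    P.t i ∈ Set.Icc a b := by
  constructor
  · have h := P.t_le_t_s12 (Nat.zero_le i) hi
    rwa [P.t_first] at h
  · have h := P.t_le_t_s12 hi le_rfl
    rwa [P.t_last] at h

lemma TaggedPartition.tag_mem_Icc {a b : ℝ} (P : TaggedPartition a b) {i : ℕ} (hi : i < P.n) :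
    P.tag i ∈ Set.Icc a b := by
  obtain ⟨h1, h2⟩ := P.tag_mem i hi
  exact ⟨le_trans (P.t_mem (le_of_lt hi : i ≤ P.n)).1 h1,
    le_trans h2 (P.t_mem (hi : i + 1 ≤ P.n)).2⟩

lemma TaggedPartition.append_s12 {a x : ℝ} (δ : ℝ → ℝ) (P : TaggedPartition a x)
    (hP : P.Subordinate δ) {y τ : ℝ} (hxy : x ≤ y) (hτ : τ ∈ Set.Icc x y)
    (hball : Set.Icc x y ⊆ Set.Ioo (τ - δ τ) (τ + δ τ)) :
    ∃ Q : TaggedPartition a y, Q.Subordinate δ := by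
  refine ⟨⟨P.n + 1, fun i => if i ≤ P.n then P.t i else y,
      fun i => if i < P.n then P.tag i else τ, ?_, ?_, ?_, ?_⟩, ?_⟩
  · simp [P.t_first]
  · simp
  · intro i hi
    replace hi : i < P.n + 1 := hi
    rcases Nat.lt_or_ge i P.n with h | h
    · simp only [if_pos (le_of_lt h), if_pos (Nat.succ_le_of_lt h)]
      exact P.t_mono i h
    · have hi' : i = P.n := by omega
      subst hi'
      simp only [if_pos le_rfl, if_neg (by omega : ¬ P.n + 1 ≤ P.n)]
      rw [P.t_last]; exact hxy
  · intro i hi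
    replace hi : i < P.n + 1 := hi
    rcases Nat.lt_or_ge i P.n with h | h
    · simpa only [if_pos h, if_pos (le_of_lt h), if_pos (Nat.succ_le_of_lt h)]
        using P.tag_mem i h
    · have hi' : i = P.n := by omega
      subst hi'
      simp only [if_neg (lt_irrefl P.n), if_pos le_rfl, if_neg (by omega : ¬ P.n + 1 ≤ P.n)]
      rw [P.t_last]; exact hτ
  · intro i hi
    replace hi : i < P.n + 1 := hi
    rcases Nat.lt_or_ge i P.n with h | h
    · simpa only [TaggedPartition.Subordinate, if_pos h, if_pos (le_of_lt h),
        if_pos (Nat.succ_le_of_lt h)] using hP i h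
    · have hi' : i = P.n := by omega
      subst hi'
      simp only [TaggedPartition.Subordinate, if_neg (lt_irrefl P.n), if_pos le_rfl,
        if_neg (by omega : ¬ P.n + 1 ≤ P.n)]
      rw [P.t_last]; exact hball

lemma cousin {a b : ℝ} (hab : a ≤ b) (δ : ℝ → ℝ) (hδ : IsGauge a b δ) :
    ∃ P : TaggedPartition a b, P.Subordinate δ := by
  set S : Set ℝ := {x | x ∈ Set.Icc a b ∧ ∃ P : TaggedPartition a x, P.Subordinate δ} with hS
  have haS : a ∈ S := by
    refine ⟨⟨le_rfl, hab⟩, ⟨0, fun _ => a, fun _ => a, rfl, rfl, ?_, ?_⟩, ?_⟩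
    · intro i hi; exact absurd hi (Nat.not_lt_zero i)
    · intro i hi; exact absurd hi (Nat.not_lt_zero i)
    · intro i hi; exact absurd hi (Nat.not_lt_zero i)
  have hbdd : BddAbove S := ⟨b, fun x hx => hx.1.2⟩
  set s := sSup S with hs
  have has : a ≤ s := le_csSup hbdd haS
  have hsb : s ≤ b := csSup_le ⟨a, haS⟩ (fun x hx => hx.1.2)
  have hδs : 0 < δ s := hδ s ⟨has, hsb⟩
  obtain ⟨x, hxS, hxgt⟩ := exists_lt_of_lt_csSup ⟨a, haS⟩ (by linarith : s - δ s < s)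
  have hxle : x ≤ s := le_csSup hbdd hxS
  obtain ⟨P, hP⟩ := hxS.2
  obtain ⟨Q, hQ⟩ := P.append_s12 δ hP hxle ⟨hxle, le_rfl⟩
    (fun z hz => ⟨lt_of_lt_of_le hxgt hz.1, lt_of_le_of_lt hz.2 (by linarith)⟩)
  have hsS : s ∈ S := ⟨⟨has, hsb⟩, Q, hQ⟩
  have hsbe : s = b := by
    by_contra hne
    have hsb' : s < b := lt_of_le_of_ne hsb hne
    set y := min b (s + δ s / 2) with hy
    have hsy : s < y := lt_min hsb' (by linarith)
    obtain ⟨R, hR⟩ := Q.append_s12 δ hQ (le_of_lt hsy) ⟨le_rfl, le_of_lt hsy⟩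
      (fun z hz => ⟨by linarith [hz.1], lt_of_le_of_lt hz.2
        (lt_of_le_of_lt (min_le_right b (s + δ s / 2)) (by linarith))⟩)
    have hyS : y ∈ S := ⟨⟨by linarith, min_le_left _ _⟩, R, hR⟩
    exact absurd (le_csSup hbdd hyS) (not_le.mpr hsy)
  rw [hsbe] at hsS
  exact hsS.2

/-- the even extension `x ↦ c(|x|)` of the Cantor–Lebesgue function has
negligible conditional variation, but not negligible variation, on `D = C ∪ (−C)`. -/
theorem stmt12 (c : ℝ → ℝ)
    (hc_mono : MonotoneOn c (Set.Icc 0 1)) (hc_cont : ContinuousOn c (Set.Icc 0 1))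
    (hc0 : c 0 = 0) (hc1 : c 1 = 1)
    (hc_const : ∀ x ∈ Set.Icc (0:ℝ) 1, x ∉ cantorSet → ∀ᶠ y in nhds x, c y = c x) :
    NegCondVar (-1) 1 (fun x => c |x|) (cantorSet ∪ (fun x : ℝ => -x) '' cantorSet) ∧
    ¬ NegVar (-1) 1 (fun x => c |x|) (cantorSet ∪ (fun x : ℝ => -x) '' cantorSet) := by
  have habsD : ∀ x : ℝ, x ∉ (cantorSet ∪ (fun x : ℝ => -x) '' cantorSet) → |x| ∉ cantorSet := by
    intro x hx hC
    rcases abs_cases x with ⟨he, _⟩ | ⟨he, _⟩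
    · exact hx (Or.inl (he ▸ hC))
    · exact hx (Or.inr ⟨|x|, hC, by rw [he]; ring⟩)
  have hrex : ∀ x : ℝ, ∃ r : ℝ, 0 < r ∧ (x ∈ Set.Icc (-1:ℝ) 1 → |x| ∉ cantorSet →
      ∀ y : ℝ, |y - x| < r → c |y| = c |x|) := by
    intro x
    by_cases hx : x ∈ Set.Icc (-1:ℝ) 1 ∧ |x| ∉ cantorSet
    · have hx1 : |x| ∈ Set.Icc (0:ℝ) 1 := ⟨abs_nonneg x, abs_le.mpr ⟨hx.1.1, hx.1.2⟩⟩
      obtain ⟨r, hr0, hrc⟩ := Metric.eventually_nhds_iff.mp (hc_const _ hx1 hx.2)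
      refine ⟨r, hr0, fun _ _ y hy => hrc ?_⟩
      rw [Real.dist_eq]
      exact lt_of_le_of_lt (abs_abs_sub_abs_le_abs_sub y x) hy
    · exact ⟨1, one_pos, fun h1 h2 => absurd ⟨h1, h2⟩ hx⟩
  choose r hr0 hrc using hrex
  have hzero : ∀ (δ' : ℝ → ℝ), (∀ z, δ' z ≤ r z) → ∀ (P : TaggedPartition (-1:ℝ) 1),
      P.Subordinate δ' → ∀ i < P.n, P.tag i ∉ (cantorSet ∪ (fun x : ℝ => -x) '' cantorSet) → c |P.t (i+1)| = c |P.t i| := by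
    intro δ' hle P hP i hi htag
    have htagI : P.tag i ∈ Set.Icc (-1:ℝ) 1 := P.tag_mem_Icc hi
    have hsub := hP i hi
    have h1 := hsub ⟨le_rfl, P.t_mono i hi⟩
    have h2 := hsub ⟨P.t_mono i hi, le_rfl⟩
    have hC := habsD _ htag
    have hlei := hle (P.tag i)
    have e1 : c |P.t i| = c |P.tag i| := by
      refine hrc _ htagI hC _ ?_
      rw [abs_sub_lt_iff]
      exact ⟨by linarith [h1.2], by linarith [h1.1]⟩
    have e2 : c |P.t (i+1)| = c |P.tag i| := by
      refine hrc _ htagI hC _ ?_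
      rw [abs_sub_lt_iff]
      exact ⟨by linarith [h2.2], by linarith [h2.1]⟩
    rw [e1, e2]
  constructor
  · intro ε hε
    refine ⟨r, fun x _ => hr0 x, fun P hP => ?_⟩
    have hsum : (∑ i ∈ Finset.range P.n,
        if P.tag i ∈ (cantorSet ∪ (fun x : ℝ => -x) '' cantorSet) then (fun x => c |x|) (P.t (i+1)) - (fun x => c |x|) (P.t i) else 0)
        = ∑ i ∈ Finset.range P.n, ((fun x => c |x|) (P.t (i+1)) - (fun x => c |x|) (P.t i)) := by
      refine Finset.sum_congr rfl fun i hi => ?_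
      by_cases h : P.tag i ∈ (cantorSet ∪ (fun x : ℝ => -x) '' cantorSet)
      · rw [if_pos h]
      · rw [if_neg h]
        have h0 := hzero r (fun z => le_rfl) P hP i (Finset.mem_range.mp hi) h
        show (0:ℝ) = c |P.t (i+1)| - c |P.t i|
        rw [h0, sub_self]
    have hmine : |∑ i ∈ Finset.range P.n,
        (if P.tag i ∈ (cantorSet ∪ (fun x : ℝ => -x) '' cantorSet) then
          (fun x => c |x|) (P.t (i+1)) - (fun x => c |x|) (P.t i) else 0)| < ε := by
      rw [hsum, Finset.sum_range_sub (fun i => (fun x => c |x|) (P.t i)), P.t_last, P.t_first]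
      simp only [abs_one, abs_neg]
      rw [sub_self, abs_zero]
      exact hε
    exact lt_of_eq_of_lt (by congr!) hmine
  · intro hNV
    obtain ⟨δ, hδg, hδsum⟩ := hNV (1/2) (by norm_num)
    have hcw : ContinuousWithinAt c (Set.Icc 0 1) 0 := hc_cont 0 ⟨le_rfl, by norm_num⟩
    obtain ⟨ρ, hρ0, hρ⟩ := Metric.continuousWithinAt_iff.mp hcw (1/4) (by norm_num)
    set δ₂ : ℝ → ℝ := fun x => min (δ x) (min (r x) (ρ/4)) with hδ₂def
    have hδ₂g : IsGauge (-1) 1 δ₂ := fun x hx =>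
      lt_min (hδg x hx) (lt_min (hr0 x) (by linarith))
    obtain ⟨P, hP⟩ := cousin (by norm_num : (-1:ℝ) ≤ 1) δ₂ hδ₂g
    have hPδ : P.Subordinate δ := by
      intro i hi z hz
      obtain ⟨h1, h2⟩ := hP i hi hz
      have hle : δ₂ (P.tag i) ≤ δ (P.tag i) := min_le_left _ _
      exact ⟨by linarith, by linarith⟩
    have hsum := hδsum P hPδ
    have hex : ∃ i, 0 ≤ P.t i := ⟨P.n, by rw [P.t_last]; norm_num⟩
    set m := Nat.find hex with hm
    have hm0 : 0 ≤ P.t m := Nat.find_spec hex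
    have hmn : m ≤ P.n := Nat.find_le (by rw [P.t_last]; norm_num)
    have hm1 : 1 ≤ m := by
      rcases Nat.eq_zero_or_pos m with h | h
      · exfalso; have h0 := hm0; rw [h, P.t_first] at h0; linarith
      · exact h
    have hprev : P.t (m-1) < 0 := not_le.mp (Nat.find_min hex (by omega))
    have hi0 : m - 1 < P.n := by omega
    have hsucc : m - 1 + 1 = m := by omega
    have hsub := hP (m-1) hi0
    have hA := hsub ⟨le_rfl, P.t_mono _ hi0⟩
    have hB := hsub ⟨P.t_mono _ hi0, le_rfl⟩
    rw [hsucc] at hB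
    have hδ₂ρ : δ₂ (P.tag (m-1)) ≤ ρ/4 := le_trans (min_le_right _ _) (min_le_right _ _)
    have htmρ : P.t m < ρ := by
      have := hA.1
      have := hB.2
      linarith
    have htm1 : P.t m ≤ 1 := (P.t_mem hmn).2
    have hmemtm : P.t m ∈ Set.Icc (0:ℝ) 1 := ⟨hm0, htm1⟩
    have hctm : c (P.t m) < 1/4 := by
      have hd := hρ hmemtm (by rw [Real.dist_eq, sub_zero, abs_of_nonneg hm0]; exact htmρ)
      rw [Real.dist_eq, hc0, sub_zero] at hd
      exact lt_of_le_of_lt (le_abs_self _) hd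
    have key : ∀ i ∈ Finset.Ico m P.n,
        c |P.t (i+1)| - c |P.t i| ≤
          (if P.tag i ∈ (cantorSet ∪ (fun x : ℝ => -x) '' cantorSet) then |(fun x => c |x|) (P.t (i+1)) - (fun x => c |x|) (P.t i)| else 0) := by
      intro i hi
      obtain ⟨him, hin⟩ := Finset.mem_Ico.mp hi
      by_cases h : P.tag i ∈ (cantorSet ∪ (fun x : ℝ => -x) '' cantorSet)
      · rw [if_pos h]; exact le_abs_self _
      · rw [if_neg h]
        have := hzero δ₂ (fun z => le_trans (min_le_right _ _) (min_le_left _ _)) P hP i hin h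
        rw [this, sub_self]
    have h1 : (∑ i ∈ Finset.Ico m P.n, (c |P.t (i+1)| - c |P.t i|)) ≤
        ∑ i ∈ Finset.Ico m P.n,
          (if P.tag i ∈ (cantorSet ∪ (fun x : ℝ => -x) '' cantorSet) then |(fun x => c |x|) (P.t (i+1)) - (fun x => c |x|) (P.t i)| else 0) :=
      Finset.sum_le_sum key
    have h2 : (∑ i ∈ Finset.Ico m P.n,
          (if P.tag i ∈ (cantorSet ∪ (fun x : ℝ => -x) '' cantorSet) then |(fun x => c |x|) (P.t (i+1)) - (fun x => c |x|) (P.t i)| else 0)) ≤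
        ∑ i ∈ Finset.range P.n,
          (if P.tag i ∈ (cantorSet ∪ (fun x : ℝ => -x) '' cantorSet) then |(fun x => c |x|) (P.t (i+1)) - (fun x => c |x|) (P.t i)| else 0) := by
      refine Finset.sum_le_sum_of_subset_of_nonneg ?_ ?_
      · intro i hi
        exact Finset.mem_range.mpr (Finset.mem_Ico.mp hi).2
      · intro i _ _
        by_cases h : P.tag i ∈ (cantorSet ∪ (fun x : ℝ => -x) '' cantorSet)
        · rw [if_pos h]; exact abs_nonneg _
        · rw [if_neg h]
    have htel : (∑ i ∈ Finset.Ico m P.n, (c |P.t (i+1)| - c |P.t i|))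
        = c |P.t P.n| - c |P.t m| := by
      rw [Finset.sum_Ico_eq_sub _ hmn, Finset.sum_range_sub (fun i => c |P.t i|),
        Finset.sum_range_sub (fun i => c |P.t i|)]
      ring
    rw [htel, P.t_last, abs_one, hc1, abs_of_nonneg hm0] at h1
    have hsum' : (∑ i ∈ Finset.range P.n,
        if P.tag i ∈ (cantorSet ∪ (fun x : ℝ => -x) '' cantorSet) then
          |(fun x => c |x|) (P.t (i + 1)) - (fun x => c |x|) (P.t i)| else 0) < 1/2 :=
      lt_of_eq_of_lt (by congr!) hsum
    linarith
end
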